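/- arXiv:2503.15142 — 2 statements merged into one kernel-verified Lean document; each statement's English description precedes it below -/
import Mathlib

section
/- With the notation of the varying-domain Brezis–Lieb lemma, the gradients also split: ∫_{Ω_n}|∇u_n|² = ∫_{Ω_n}|∇u_n − ∇u|² + ∫_{Ω_∞}|∇u|² + o(1) as n → ∞. -/
open MeasureTheory Set Filter Topology Metric Bornology

noncomputable section

abbrev E2 := EuclideanSpace ℝ (Fin 2)

/-- Squared L² norm of the gradient of `u` on `Ω`. -/
def grad2 (Ω : Set E2) (u : E2 → ℝ) : ℝ := ∫ x in Ω, ‖gradient u x‖ ^ 2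

/-- `∫_Ω |u|^p` (p-th power of the L^p norm). -/
def lpPow (Ω : Set E2) (p : ℝ) (u : E2 → ℝ) : ℝ := ∫ x in Ω, |u x| ^ p

/-- Squared L² norm (the mass) of `u` on `Ω`. -/
def mass (Ω : Set E2) (u : E2 → ℝ) : ℝ := ∫ x in Ω, (u x) ^ 2

/-- Membership in H¹(Ω). -/
def MemH1 (Ω : Set E2) (u : E2 → ℝ) : Prop :=
  DifferentiableOn ℝ u Ω ∧ MemLp u 2 (volume.restrict Ω) ∧
    MemLp (fun x => gradient u x) 2 (volume.restrict Ω)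

/-- NLS energy functional `E_p(u,Ω)`. -/
def energy (Ω : Set E2) (p : ℝ) (u : E2 → ℝ) : ℝ :=
  (1 / 2) * grad2 Ω u - (1 / p) * lpPow Ω p u

/-- NLS action functional `J_p(u,λ,Ω)`. -/
def action (Ω : Set E2) (p lam : ℝ) (u : E2 → ℝ) : ℝ :=
  energy Ω p u + (lam / 2) * mass Ω u

/-- The Nehari manifold `N_p(λ,Ω)`. -/
def Nehari (Ω : Set E2) (p lam : ℝ) (u : E2 → ℝ) : Prop :=
  MemH1 Ω u ∧ u ≠ 0 ∧ grad2 Ω u + lam * mass Ω u = lpPow Ω p u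

/-- Energy ground state level `ℰ_p(μ,Ω)`. -/
def energyLevel (Ω : Set E2) (p μ : ℝ) : ℝ :=
  sInf {c | ∃ u, MemH1 Ω u ∧ mass Ω u = μ ∧ c = energy Ω p u}

/-- Action ground state level `𝒥_p(λ,Ω)`. -/
def actionLevel (Ω : Set E2) (p lam : ℝ) : ℝ :=
  sInf {c | ∃ u, Nehari Ω p lam u ∧ c = action Ω p lam u}

/-- `u` is an energy ground state with mass `μ`. -/
def EnergyGS (Ω : Set E2) (p μ : ℝ) (u : E2 → ℝ) : Prop :=
  MemH1 Ω u ∧ mass Ω u = μ ∧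
    ∀ v, MemH1 Ω v → mass Ω v = μ → energy Ω p u ≤ energy Ω p v

/-- `u` is an action ground state at frequency `lam`. -/
def ActionGS (Ω : Set E2) (p lam : ℝ) (u : E2 → ℝ) : Prop :=
  Nehari Ω p lam u ∧ ∀ v, Nehari Ω p lam v → action Ω p lam u ≤ action Ω p lam v

/-- The planar sector `Σ_α` of amplitude `α`. -/
def sector (α : ℝ) : Set E2 :=
  {x | ∃ t θ : ℝ, 0 < t ∧ θ ∈ Ioo 0 α ∧ x 0 = t * Real.cos θ ∧ x 1 = t * Real.sin θ}

/-- `u` is a radial function. -/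
def Radial (u : E2 → ℝ) : Prop := ∃ f : ℝ → ℝ, ∀ x, u x = f ‖x‖

/-- The H¹(Ω) norm. -/
def h1norm (Ω : Set E2) (u : E2 → ℝ) : ℝ := Real.sqrt (mass Ω u + grad2 Ω u)

/-!
Expanding `‖∇uₙ - ∇v‖² = ‖∇uₙ‖² - 2⟪∇uₙ, ∇v⟫ + ‖∇v‖²` on `Ωₙ` reduces the claim to
`∫_{Ωₙ} ‖∇v‖² → ∫_{Ω∞} ‖∇v‖²`, which is dominated convergence because every point of `Ω∞`
eventually lies in `Ωₙ`, and to `∫_{Ωₙ} ⟪∇uₙ, ∇v⟫ → ∫_{Ω∞} ‖∇v‖²`. For the latter, the zero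
extensions of `∇uₙ` form a bounded sequence in `L²(Ω∞)` whose pairings with continuous fields
compactly supported in `Ω∞` converge. Such fields are dense in `L²(Ω∞)`, and pairing against a
bounded sequence is an equicontinuous family of functionals, so the convergence passes to the
closure and in particular to the pairing with `∇v`.
-/

open scoped ENNReal InnerProductSpace

theorem tendsto_inner_of_mem_closure {𝕜 H ι : Type*} [RCLike 𝕜] [NormedAddCommGroup H]
    [InnerProductSpace 𝕜 H] {l : Filter ι} {x : ι → H} {C : ℝ} (hx : ∀ i, ‖x i‖ ≤ C) {y : H}
    {S : Set H} (hS : ∀ w ∈ S, Tendsto (fun i => ⟪x i, w⟫_𝕜) l (𝓝 ⟪y, w⟫_𝕜))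
    {z : H} (hz : z ∈ closure S) : Tendsto (fun i => ⟪x i, z⟫_𝕜) l (𝓝 ⟪y, z⟫_𝕜) := by
  have hlip : ∀ i, LipschitzWith C.toNNReal (fun w => ⟪x i, w⟫_𝕜) := fun i =>
    LipschitzWith.of_dist_le_mul fun w w' => by
      rw [dist_eq_norm, ← inner_sub_right, dist_eq_norm]
      exact (norm_inner_le_norm _ _).trans
        (mul_le_mul_of_nonneg_right ((hx i).trans C.le_coe_toNNReal) (norm_nonneg _))
  exact ((LipschitzWith.uniformEquicontinuous _ _ hlip).equicontinuous z).tendsto_of_mem_closure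
    (continuous_const.inner continuous_id).continuousWithinAt hS hz

section MeasureSpace

variable {α : Type*} [MeasurableSpace α] {μ : Measure α}

theorem L2.inner_eq_integral_of_ae_eq {E : Type*} [NormedAddCommGroup E] [InnerProductSpace ℝ E]
    {a b : Lp E 2 μ} {f g : α → E} (ha : a =ᵐ[μ] f) (hb : b =ᵐ[μ] g) :
    ⟪a, b⟫_ℝ = ∫ x, ⟪f x, g x⟫_ℝ ∂μ := by
  rw [L2.inner_def]
  exact integral_congr_ae (by filter_upwards [ha, hb] with x hax hbx using by rw [hax, hbx])

theorem L2.norm_sq_eq_integral_of_ae_eq {E : Type*} [NormedAddCommGroup E]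
    [InnerProductSpace ℝ E] {a : Lp E 2 μ} {f : α → E} (ha : a =ᵐ[μ] f) :
    ‖a‖ ^ 2 = ∫ x, ‖f x‖ ^ 2 ∂μ := by
  simp only [← real_inner_self_eq_norm_sq, L2.inner_eq_integral_of_ae_eq ha ha]

theorem integral_norm_sub_sq {E : Type*} [NormedAddCommGroup E] [InnerProductSpace ℝ E]
    {f g : α → E} (hf : MemLp f 2 μ) (hg : MemLp g 2 μ) :
    ∫ x, ‖f x - g x‖ ^ 2 ∂μ =
      ∫ x, ‖f x‖ ^ 2 ∂μ - 2 * ∫ x, ⟪f x, g x⟫_ℝ ∂μ + ∫ x, ‖g x‖ ^ 2 ∂μ := by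
  have hsub : hf.toLp f - hg.toLp g =ᵐ[μ] fun x => f x - g x := by
    filter_upwards [Lp.coeFn_sub (hf.toLp f) (hg.toLp g), hf.coeFn_toLp, hg.coeFn_toLp]
      with x hx hfx hgx
    rw [hx, Pi.sub_apply, hfx, hgx]
  rw [← L2.norm_sq_eq_integral_of_ae_eq hsub, norm_sub_sq_real,
    L2.norm_sq_eq_integral_of_ae_eq hf.coeFn_toLp, L2.norm_sq_eq_integral_of_ae_eq hg.coeFn_toLp,
    L2.inner_eq_integral_of_ae_eq hf.coeFn_toLp hg.coeFn_toLp]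

theorem setIntegral_comp_indicator {E F : Type*} [Zero E] [NormedAddCommGroup F]
    [NormedSpace ℝ F] {Φ : α → E → F} (hΦ : ∀ x, Φ x 0 = 0) {s t : Set α} (hs : MeasurableSet s)
    (hst : s ⊆ t) (f : α → E) :
    ∫ x in t, Φ x (s.indicator f x) ∂μ = ∫ x in s, Φ x (f x) ∂μ := by
  have hΦf : (fun x => Φ x (s.indicator f x)) = s.indicator fun x => Φ x (f x) := by
    ext x
    by_cases hx : x ∈ s <;> simp [hx, hΦ]
  rw [hΦf, setIntegral_indicator hs, inter_eq_right.2 hst]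

theorem tendsto_setIntegral_of_eventually_mem {G ι : Type*} [NormedAddCommGroup G]
    [NormedSpace ℝ G] {l : Filter ι} [l.IsCountablyGenerated] {U : Set α} (hU : MeasurableSet U)
    {Ω : ι → Set α} (hΩ : ∀ i, MeasurableSet (Ω i)) (hΩU : ∀ i, Ω i ⊆ U)
    (hmem : ∀ x ∈ U, ∀ᶠ i in l, x ∈ Ω i) {f : α → G} (hf : IntegrableOn f U μ) :
    Tendsto (fun i => ∫ x in Ω i, f x ∂μ) l (𝓝 (∫ x in U, f x ∂μ)) := by
  have hind : ∀ i, ∫ x in Ω i, f x ∂μ = ∫ x in U, (Ω i).indicator f x ∂μ := fun i =>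
    (setIntegral_comp_indicator (Φ := fun _ y => y) (fun _ => rfl) (hΩ i) (hΩU i) f).symm
  simp only [hind]
  refine tendsto_integral_filter_of_dominated_convergence (fun x => ‖f x‖)
    (Eventually.of_forall fun i => hf.aestronglyMeasurable.indicator (hΩ i))
    (Eventually.of_forall fun i => Eventually.of_forall fun x => norm_indicator_le_norm_self _ _)
    hf.norm ?_
  filter_upwards [ae_restrict_mem hU] with x hx
  exact tendsto_const_nhds.congr' ((hmem x hx).mono fun i hi => (indicator_of_mem hi f).symm)

end MeasureSpace

section LocallyCompact

variable {α : Type*} [TopologicalSpace α] [NormalSpace α] [R1Space α]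
  [WeaklyLocallyCompactSpace α] [MeasurableSpace α] [BorelSpace α] {μ : Measure α} [μ.Regular]

theorem MeasureTheory.MemLp.exists_tsupport_subset_eLpNorm_sub_le {E : Type*}
    [NormedAddCommGroup E] [NormedSpace ℝ E] {p : ℝ≥0∞} (hp : p ≠ ∞) {U : Set α}
    (hU : IsOpen U) {f : α → E} (hf : MemLp f p (μ.restrict U)) {ε : ℝ≥0∞} (hε : ε ≠ 0) :
    ∃ g : α → E, Continuous g ∧ HasCompactSupport g ∧ tsupport g ⊆ U ∧
      eLpNorm (f - g) p (μ.restrict U) ≤ ε ∧ MemLp g p (μ.restrict U) := by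
  set P : (α → E) → Prop := fun g =>
    Continuous g ∧ HasCompactSupport g ∧ tsupport g ⊆ U ∧ MemLp g p (μ.restrict U)
  have hP_indicator : ∀ (c : E) ⦃t : Set α⦄, MeasurableSet t → μ.restrict U t < ∞ →
      ∀ {δ : ℝ≥0∞}, δ ≠ 0 →
        ∃ g, eLpNorm (g - t.indicator fun _ => c) p (μ.restrict U) ≤ δ ∧ P g := by
    intro c t ht htμ δ hδ
    obtain ⟨δ', hδ'0, hδ'⟩ := exists_Lp_half E (μ.restrict U) p hδ
    obtain ⟨η, hη0, hη⟩ := exists_eLpNorm_indicator_le hp c (μ := μ.restrict U) hδ'0.ne'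
    rw [Measure.restrict_apply ht] at htμ
    obtain ⟨s, hst, hs_compact, hs_closed, hμs⟩ :=
      (ht.inter hU.measurableSet).exists_isCompact_isClosed_sdiff_lt htμ.ne
        (ENNReal.coe_pos.2 hη0).ne'
    obtain ⟨k, hk_compact, hk_closed, hsk, hkU⟩ :=
      exists_compact_closed_between hs_compact hU (hst.trans inter_subset_right)
    obtain ⟨g, hg_cont, hgs, -, hg_supp, hg_mem⟩ :=
      exists_continuous_eLpNorm_sub_le_of_closed hp hs_closed isOpen_interior hsk
        (measure_mono hst |>.trans_lt htμ).ne c hδ'0.ne'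
    have hts : eLpNorm (s.indicator (fun _ => c) - t.indicator fun _ => c) p (μ.restrict U)
        ≤ δ' := by
      rw [← eLpNorm_neg, neg_sub, ← indicator_sdiff (hst.trans inter_subset_left)]
      refine hη _ ?_
      rw [Measure.restrict_apply (ht.diff hs_closed.measurableSet)]
      refine le_trans (measure_mono fun x hx => ?_) hμs.le
      exact ⟨⟨hx.1.1, hx.2⟩, hx.1.2⟩
    refine ⟨g, ?_, hg_cont, HasCompactSupport.intro hk_compact fun x hx => ?_,
      (closure_minimal (hg_supp.trans interior_subset) hk_closed).trans hkU, hg_mem.restrict U⟩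
    · have hs_meas := (aestronglyMeasurable_const (b := c) (μ := μ.restrict U)).indicator
        hs_closed.measurableSet
      have := hδ' _ _ (hg_mem.restrict U |>.aestronglyMeasurable.sub hs_meas)
        (hs_meas.sub (aestronglyMeasurable_const.indicator ht))
        ((eLpNorm_restrict_le _ _ _ _).trans hgs) hts
      simpa only [sub_add_sub_cancel] using this.le
    · exact Function.notMem_support.1 fun h => hx (interior_subset (hg_supp h))
  have hP_add : ∀ f g, P f → P g → P (f + g) := by
    rintro f g ⟨hf, hfc, hfU, hfm⟩ ⟨hg, hgc, hgU, hgm⟩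
    exact ⟨hf.add hg, hfc.add hgc, (tsupport_add f g).trans (union_subset hfU hgU), hfm.add hgm⟩
  obtain ⟨g, hfg, hg_cont, hg_compact, hgU, hg_mem⟩ :=
    hf.induction_dense hp P hP_indicator hP_add (fun g hg => hg.2.2.2.aestronglyMeasurable) hε
  exact ⟨g, hg_cont, hg_compact, hgU, hfg, hg_mem⟩

theorem tendsto_setIntegral_inner_of_forall_hasCompactSupport {E ι : Type*}
    [NormedAddCommGroup E] [InnerProductSpace ℝ E] {l : Filter ι} {U : Set α} (hU : IsOpen U)
    {Ω : ι → Set α} (hΩ : ∀ i, MeasurableSet (Ω i)) (hΩU : ∀ i, Ω i ⊆ U)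
    {f : ι → α → E} (hf : ∀ i, MemLp (f i) 2 (μ.restrict (Ω i))) {C : ℝ}
    (hC : ∀ i, ∫ x in Ω i, ‖f i x‖ ^ 2 ∂μ ≤ C) {g : α → E} (hg : MemLp g 2 (μ.restrict U))
    (hlim : ∀ w : α → E, Continuous w → HasCompactSupport w → tsupport w ⊆ U →
      Tendsto (fun i => ∫ x in Ω i, ⟪f i x, w x⟫_ℝ ∂μ) l (𝓝 (∫ x in U, ⟪g x, w x⟫_ℝ ∂μ)))
    {h : α → E} (hh : MemLp h 2 (μ.restrict U)) :
    Tendsto (fun i => ∫ x in Ω i, ⟪f i x, h x⟫_ℝ ∂μ) l (𝓝 (∫ x in U, ⟪g x, h x⟫_ℝ ∂μ)) := by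
  have hF : ∀ i, MemLp ((Ω i).indicator (f i)) 2 (μ.restrict U) := fun i => by
    rw [memLp_indicator_iff_restrict (hΩ i), Measure.restrict_restrict (hΩ i),
      inter_eq_left.2 (hΩU i)]
    exact hf i
  have hF_inner : ∀ i {k : α → E} {b : Lp E 2 (μ.restrict U)}, b =ᵐ[μ.restrict U] k →
      ⟪(hF i).toLp _, b⟫_ℝ = ∫ x in Ω i, ⟪f i x, k x⟫_ℝ ∂μ := fun i k b hb => by
    rw [L2.inner_eq_integral_of_ae_eq (hF i).coeFn_toLp hb,
      setIntegral_comp_indicator (Φ := fun x y => ⟪y, k x⟫_ℝ) (fun _ => inner_zero_left _)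
        (hΩ i) (hΩU i)]
  have hF_norm : ∀ i, ‖(hF i).toLp _‖ ≤ √C := fun i => by
    rw [← abs_norm]
    refine Real.abs_le_sqrt ?_
    rw [L2.norm_sq_eq_integral_of_ae_eq (hF i).coeFn_toLp,
      setIntegral_comp_indicator (Φ := fun _ y => ‖y‖ ^ 2) (fun _ => by simp) (hΩ i) (hΩU i)]
    exact hC i
  set S : Set (Lp E 2 (μ.restrict U)) := {b | ∃ w : α → E, Continuous w ∧
    HasCompactSupport w ∧ tsupport w ⊆ U ∧ b =ᵐ[μ.restrict U] w}
  have hS : ∀ b ∈ S, Tendsto (fun i => ⟪(hF i).toLp _, b⟫_ℝ) l (𝓝 ⟪hg.toLp g, b⟫_ℝ) := by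
    rintro b ⟨w, hw_cont, hw_compact, hwU, hbw⟩
    simp only [hF_inner _ hbw, L2.inner_eq_integral_of_ae_eq hg.coeFn_toLp hbw]
    exact hlim w hw_cont hw_compact hwU
  have hh_mem : hh.toLp h ∈ closure S := by
    refine EMetric.mem_closure_iff.2 fun ε hε => ?_
    obtain ⟨δ, hδ, hδε⟩ := exists_between hε
    obtain ⟨w, hw_cont, hw_compact, hwU, hhw, hw_mem⟩ :=
      hh.exists_tsupport_subset_eLpNorm_sub_le ENNReal.ofNat_ne_top hU hδ.ne'
    refine ⟨hw_mem.toLp w, ⟨w, hw_cont, hw_compact, hwU, hw_mem.coeFn_toLp⟩, ?_⟩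
    rw [Lp.edist_toLp_toLp]
    exact hhw.trans_lt hδε
  simpa only [hF_inner _ hh.coeFn_toLp,
    L2.inner_eq_integral_of_ae_eq hg.coeFn_toLp hh.coeFn_toLp] using
    tendsto_inner_of_mem_closure hF_norm hS hh_mem

end LocallyCompact

theorem gradient_fun_sub {F : Type*} [NormedAddCommGroup F] [InnerProductSpace ℝ F]
    [CompleteSpace F] {f g : F → ℝ} {x : F} (hf : DifferentiableAt ℝ f x)
    (hg : DifferentiableAt ℝ g x) :
    gradient (fun y => f y - g y) x = gradient f x - gradient g x := by
  simp only [gradient, fderiv_fun_sub hf hg, map_sub]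

theorem grad2_le_sq_of_h1norm_le {Ω : Set E2} {u : E2 → ℝ} {C : ℝ} (h : h1norm Ω u ≤ C) :
    grad2 Ω u ≤ C ^ 2 := by
  have hmass : 0 ≤ mass Ω u := integral_nonneg fun x => sq_nonneg _
  rw [h1norm, Real.sqrt_le_iff] at h
  linarith [h.2]

theorem grad2_sub {Ω : Set E2} (hΩ : IsOpen Ω) {u v : E2 → ℝ} (hu : DifferentiableOn ℝ u Ω)
    (hv : DifferentiableOn ℝ v Ω) (hu' : MemLp (gradient u) 2 (volume.restrict Ω))
    (hv' : MemLp (gradient v) 2 (volume.restrict Ω)) :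
    grad2 Ω (fun x => u x - v x) =
      grad2 Ω u - 2 * (∫ x in Ω, ⟪gradient u x, gradient v x⟫_ℝ) +
        ∫ x in Ω, ‖gradient v x‖ ^ 2 := by
  refine (setIntegral_congr_fun hΩ.measurableSet fun x hx => ?_).trans
    (integral_norm_sub_sq hu' hv')
  rw [gradient_fun_sub (hu.differentiableAt (hΩ.mem_nhds hx))
    (hv.differentiableAt (hΩ.mem_nhds hx))]

theorem brezis_lieb_gradients_varying_domains_general (Ω : ℕ → Set E2) (Ωi : Set E2)
    (hΩn : ∀ n, IsOpen (Ω n)) (hΩi : IsOpen Ωi) (hsub : ∀ n, Ω n ⊆ Ωi)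
    (hinc : ∀ K : Set E2, IsCompact K → K ⊆ Ωi → ∃ N, ∀ n ≥ N, K ⊆ Ω n)
    (u : ℕ → E2 → ℝ) (hmem : ∀ n, MemH1 (Ω n) (u n))
    (hbdd : ∃ C, ∀ n, h1norm (Ω n) (u n) ≤ C)
    (v : E2 → ℝ) (hv : MemH1 Ωi v)
    (hweak : ∀ w : E2 → E2, Continuous w → HasCompactSupport w → tsupport w ⊆ Ωi →
      Tendsto (fun n => ∫ x in Ω n, (inner ℝ (gradient (u n) x) (w x) : ℝ)) atTop
        (nhds (∫ x in Ωi, (inner ℝ (gradient v x) (w x) : ℝ)))) :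
    Tendsto (fun n => grad2 (Ω n) (u n) -
        grad2 (Ω n) (fun x => u n x - v x) - grad2 Ωi v) atTop (nhds 0) := by
  obtain ⟨C, hC⟩ := hbdd
  have hΩ : ∀ n, MeasurableSet (Ω n) := fun n => (hΩn n).measurableSet
  have hv_grad : ∀ n, MemLp (gradient v) 2 (volume.restrict (Ω n)) := fun n =>
    hv.2.2.mono_measure (Measure.restrict_mono (hsub n) le_rfl)
  have hcross : Tendsto (fun n => ∫ x in Ω n, ⟪gradient (u n) x, gradient v x⟫_ℝ) atTop
      (𝓝 (grad2 Ωi v)) := by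
    simpa only [grad2, real_inner_self_eq_norm_sq] using
      tendsto_setIntegral_inner_of_forall_hasCompactSupport hΩi hΩ hsub (fun n => (hmem n).2.2)
        (fun n => grad2_le_sq_of_h1norm_le (hC n)) hv.2.2 hweak hv.2.2
  have hgrad_v :
      Tendsto (fun n => ∫ x in Ω n, ‖gradient v x‖ ^ 2) atTop (𝓝 (grad2 Ωi v)) := by
    refine tendsto_setIntegral_of_eventually_mem hΩi.measurableSet hΩ hsub (fun x hx => ?_)
      (hv.2.2.integrable_norm_pow two_ne_zero)
    obtain ⟨N, hN⟩ := hinc {x} isCompact_singleton (singleton_subset_iff.2 hx)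
    exact eventually_atTop.2 ⟨N, fun n hn => hN n hn rfl⟩
  have hsplit : ∀ n, grad2 (Ω n) (u n) - grad2 (Ω n) (fun x => u n x - v x) - grad2 Ωi v =
      2 * (∫ x in Ω n, ⟪gradient (u n) x, gradient v x⟫_ℝ) -
        (∫ x in Ω n, ‖gradient v x‖ ^ 2) - grad2 Ωi v := fun n => by
    rw [grad2_sub (hΩn n) (hmem n).1 (hv.1.mono (hsub n)) (hmem n).2.2 (hv_grad n)]
    ring
  have hlim := ((hcross.const_mul 2).sub hgrad_v).sub (tendsto_const_nhds (x := grad2 Ωi v))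
  rw [show 2 * grad2 Ωi v - grad2 Ωi v - grad2 Ωi v = 0 by ring] at hlim
  exact hlim.congr fun n => (hsplit n).symm

/-- splitting of the gradient terms on varying domains. -/
theorem brezis_lieb_gradients_varying_domains (Ω : ℕ → Set E2) (Ωi : Set E2)
    (hΩn : ∀ n, IsOpen (Ω n)) (hΩi : IsOpen Ωi) (hsub : ∀ n, Ω n ⊆ Ωi)
    (hinc : ∀ K : Set E2, IsCompact K → K ⊆ Ωi → ∃ N, ∀ n ≥ N, K ⊆ Ω n)
    (u : ℕ → E2 → ℝ) (hmem : ∀ n, MemH1 (Ω n) (u n))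
    (hbdd : ∃ C, ∀ n, h1norm (Ω n) (u n) ≤ C)
    (v : E2 → ℝ) (hv : MemH1 Ωi v)
    (hstrong : ∀ K : Set E2, IsCompact K → K ⊆ Ωi →
      Tendsto (fun n => ∫ x in K, (u n x - v x) ^ 2) atTop (nhds 0))
    (hweak : ∀ w : E2 → E2, Continuous w → HasCompactSupport w → tsupport w ⊆ Ωi →
      Tendsto (fun n => ∫ x in Ω n, (inner ℝ (gradient (u n) x) (w x) : ℝ)) atTop
        (nhds (∫ x in Ωi, (inner ℝ (gradient v x) (w x) : ℝ)))) :
    Tendsto (fun n => grad2 (Ω n) (u n) -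
        grad2 (Ω n) (fun x => u n x - v x) - grad2 Ωi v) atTop (nhds 0) :=
  brezis_lieb_gradients_varying_domains_general Ω Ωi hΩn hΩi hsub hinc u hmem hbdd v hv hweak
end
end

section
/- Let Ω ⊂ ℝ² be a bounded polygon, p ∈ (2,4), μ > 0, and let u be an energy ground state with mass μ. Assume ℰ_p(μ,Ω) < 0. Then the associated Lagrange multiplier λ_u = (‖u‖^p_{L^p} − ‖∇u‖²_{L²})/μ is strictly positive, and moreover λ_u ≥ (2/p)(μ/|Ω|)^{p/2−1}. -/
open MeasureTheory Set Filter Topology Metric Bornology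

noncomputable section

/-!
Writing the energy as `E_p(u) = ½‖∇u‖² - (1/p)‖u‖_p^p` gives
`λ_u μ = ‖u‖_p^p - ‖∇u‖² = (1 - 2/p)‖u‖_p^p - 2 E_p(u) ≥ -2 E_p(u)` for `p > 2`.
Comparing the ground state with the constant `√(μ/|Ω|)`, which has mass `μ`, no gradient and
energy `-(μ/p)(μ/|Ω|)^{p/2-1}`, bounds `-2 E_p(u)` below by `(2μ/p)(μ/|Ω|)^{p/2-1} > 0`.
-/

section ConstantTestFunction

variable {Ω : Set E2}

theorem grad2_const (c : ℝ) : grad2 Ω (fun _ => c) = 0 := by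
  simp [grad2]

theorem memH1_const (hΩ : volume Ω ≠ ⊤) (c : ℝ) : MemH1 Ω (fun _ => c) := by
  have : IsFiniteMeasure (volume.restrict Ω) := isFiniteMeasure_restrict.mpr hΩ
  refine ⟨differentiableOn_const c, memLp_const c, ?_⟩
  simpa only [gradient_fun_const] using memLp_const (μ := volume.restrict Ω) (0 : E2)

theorem mass_const (c : ℝ) : mass Ω (fun _ => c) = (volume Ω).toReal * c ^ 2 := by
  simp [mass, measureReal_def]

theorem lpPow_const {c : ℝ} (hc : 0 ≤ c) (p : ℝ) :
    lpPow Ω p (fun _ => c) = (volume Ω).toReal * c ^ p := by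
  simp [lpPow, measureReal_def, abs_of_nonneg hc]

theorem mass_const_sqrt {μ : ℝ} (hμ : 0 ≤ μ) (hV : 0 < (volume Ω).toReal) :
    mass Ω (fun _ => √(μ / (volume Ω).toReal)) = μ := by
  rw [mass_const, Real.sq_sqrt (by positivity)]
  field_simp

theorem energy_const_sqrt {p μ : ℝ} (hμ : 0 < μ) (hV : 0 < (volume Ω).toReal) :
    energy Ω p (fun _ => √(μ / (volume Ω).toReal)) =
      -(μ / p) * (μ / (volume Ω).toReal) ^ (p / 2 - 1) := by
  have hμV : 0 < μ / (volume Ω).toReal := div_pos hμ hV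
  rw [energy, grad2_const, lpPow_const (Real.sqrt_nonneg _), Real.sqrt_eq_rpow,
    ← Real.rpow_mul hμV.le, Real.rpow_sub_one hμV.ne']
  field_simp
  ring_nf

end ConstantTestFunction

theorem lpPow_nonneg (Ω : Set E2) (p : ℝ) (u : E2 → ℝ) : 0 ≤ lpPow Ω p u :=
  integral_nonneg fun _ => Real.rpow_nonneg (abs_nonneg _) _

theorem lpPow_sub_grad2_eq {p : ℝ} (hp : p ≠ 0) (Ω : Set E2) (u : E2 → ℝ) :
    lpPow Ω p u - grad2 Ω u = (1 - 2 / p) * lpPow Ω p u - 2 * energy Ω p u := by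
  rw [energy]
  field_simp
  ring

theorem EnergyGS.energy_le {Ω : Set E2} {p μ : ℝ} {u : E2 → ℝ}
    (hgs : EnergyGS Ω p μ u) (hμ : 0 < μ) (hV : 0 < (volume Ω).toReal) :
    energy Ω p u ≤ -(μ / p) * (μ / (volume Ω).toReal) ^ (p / 2 - 1) := by
  have hfin : volume Ω ≠ ⊤ := fun h => by simp [h] at hV
  rw [← energy_const_sqrt hμ hV]
  exact hgs.2.2 _ (memH1_const hfin _) (mass_const_sqrt hμ.le hV)

theorem multiplier_positive_lower_bound_general (Ω : Set E2)
    (hvol : 0 < (volume Ω).toReal) (p μ : ℝ) (hp : p ∈ Ioo 2 4) (hμ : 0 < μ)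
    (u : E2 → ℝ) (hgs : EnergyGS Ω p μ u) :
    0 < (lpPow Ω p u - grad2 Ω u) / μ ∧
      (2 / p) * (μ / (volume Ω).toReal) ^ (p / 2 - 1) ≤
        (lpPow Ω p u - grad2 Ω u) / μ := by
  have hp0 : 0 < p := by linarith [hp.1]
  have hbound : 0 < (2 / p) * (μ / (volume Ω).toReal) ^ (p / 2 - 1) := by positivity
  have hcoef : 0 ≤ 1 - 2 / p := by
    rw [sub_nonneg, div_le_one hp0]
    exact hp.1.le
  have hlower : (2 / p) * (μ / (volume Ω).toReal) ^ (p / 2 - 1) ≤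
      (lpPow Ω p u - grad2 Ω u) / μ := by
    rw [le_div_iff₀ hμ, lpPow_sub_grad2_eq hp0.ne']
    have hE := hgs.energy_le hμ hvol
    have hL := mul_nonneg hcoef (lpPow_nonneg Ω p u)
    have hfactor : (2 / p) * (μ / (volume Ω).toReal) ^ (p / 2 - 1) * μ =
        -2 * (-(μ / p) * (μ / (volume Ω).toReal) ^ (p / 2 - 1)) := by ring
    linarith
  exact ⟨hbound.trans_le hlower, hlower⟩

/-- the Lagrange multiplier of an energy ground state is strictly
positive, with the explicit lower bound `(2/p)(μ/|Ω|)^{p/2-1}`. -/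
theorem multiplier_positive_lower_bound (Ω : Set E2) (hΩ : IsOpen Ω) (hb : IsBounded Ω)
    (hvol : 0 < (volume Ω).toReal) (p μ : ℝ) (hp : p ∈ Ioo 2 4) (hμ : 0 < μ)
    (u : E2 → ℝ) (hgs : EnergyGS Ω p μ u) (hneg : energyLevel Ω p μ < 0) :
    0 < (lpPow Ω p u - grad2 Ω u) / μ ∧
      (2 / p) * (μ / (volume Ω).toReal) ^ (p / 2 - 1) ≤
        (lpPow Ω p u - grad2 Ω u) / μ :=
  multiplier_positive_lower_bound_general Ω hvol p μ hp hμ u hgs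
end
end
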